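/- In the sequential toxoplasmosis environment, the two-step policy-evidential values from the empty history are V^{pev,π₁}_{μ,2} = −110/31 for the policy π₁ (no doctor, never pet) and V^{pev,π₂}_{μ,2} = −4 for the policy π₂ (see the doctor); hence V^{pev,π₁}_{μ,2} > V^{pev,π₂}_{μ,2}, i.e. SPEDT strictly prefers not seeing the doctor — the opposite preference to SAEDT. -/

import Mathlib

/-! # A framework for physicalistic sequential decision making

Following Everitt, Leike, Hutter, "Sequential Extensions of Causal and
Evidential Decision Theory".

An environment model `μ` over hidden states `S`, actions `A`, percepts `E`
with lifetime `m` is given in causally factored form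
`μ(s, æ_{1:m}) = μ(s) ∏_i μ(a_i | s, æ_{<i}) μ(e_i | s, æ_{<i} a_i)`.
Histories are lists of action-percept pairs. -/

noncomputable section

variable {S A E : Type*}

/-- The product `∏ μ(a_i | s, æ_{<i}) μ(e_i | s, æ_{<i}a_i)` of the factors along the
continuation `rest` of the history-prefix `pre`. -/
def wSuf (pa : S → List (A × E) → A → ℝ) (pe : S → List (A × E) → A → E → ℝ)
    (s : S) : List (A × E) → List (A × E) → ℝ
  | _, [] => 1
  | pre, (a, e) :: rest => pa s pre a * pe s pre a e * wSuf pa pe s (pre ++ [(a, e)]) rest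

/-- A physicalistic environment model with lifetime `m`: a prior pmf on the hidden state,
together with conditional pmfs for the action and the percept at every time step
(i.e. after every history of length `< m`), which is action-positive. -/
structure Env (S A E : Type*) [Fintype S] [Fintype A] [Fintype E] (m : ℕ) where
  /-- the prior `μ(s)` over the hidden state -/
  prior : S → ℝ
  /-- the action factor `μ(a_t | s, æ_{<t})` -/
  pa : S → List (A × E) → A → ℝ
  /-- the percept factor `μ(e_t | s, æ_{<t}a_t)` -/
  pe : S → List (A × E) → A → E → ℝ
  prior_nonneg : ∀ s, 0 ≤ prior s
  prior_sum : ∑ s, prior s = 1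
  pa_nonneg : ∀ s h a, 0 ≤ pa s h a
  pa_sum : ∀ s (h : List (A × E)), h.length < m → ∑ a, pa s h a = 1
  pe_nonneg : ∀ s h a e, 0 ≤ pe s h a e
  pe_sum : ∀ s (h : List (A × E)) (a : A), h.length < m → ∑ e, pe s h a e = 1
  /-- action-positivity: `μ(æ_{<t} | s) > 0` implies `μ(a_t | s, æ_{<t}) > 0` -/
  action_pos : ∀ s (h : List (A × E)) (a : A), h.length < m →
    0 < wSuf pa pe s [] h → 0 < pa s h a

variable [Fintype S] [Fintype A] [Fintype E] {m : ℕ}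

/-- Event: the trajectory `τ = æ_{1:m}` extends the history `h = æ_{<t}`. -/
def ExtendsH (h : List (A × E)) (τ : Fin m → A × E) : Prop :=
  (List.ofFn τ).take h.length = h

/-- Event: the actions of the trajectory `τ` from (0-based) time `t0` on follow
the deterministic policy `π`. -/
def FollowsFrom (π : List (A × E) → A) (t0 : ℕ) (τ : Fin m → A × E) : Prop :=
  ∀ i : Fin m, t0 ≤ (i : ℕ) → (τ i).1 = π ((List.ofFn τ).take (i : ℕ))

/-- Event: the action at (0-based) time `k` is `a`. -/
def ActAt (k : ℕ) (a : A) (τ : Fin m → A × E) : Prop :=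
  ∀ hk : k < m, (τ ⟨k, hk⟩).1 = a

/-- Event: the percept at (0-based) time `k` is `e`. -/
def PerAt (k : ℕ) (e : E) (τ : Fin m → A × E) : Prop :=
  ∀ hk : k < m, (τ ⟨k, hk⟩).2 = e

namespace Env

/-- The joint probability `μ(s, æ_{<t})`, given directly by the causal factorization. -/
def hw (μ : Env S A E m) (s : S) (h : List (A × E)) : ℝ :=
  μ.prior s * wSuf μ.pa μ.pe s [] h

/-- The marginal probability `μ(æ_{<t})` of a history. -/
def probH (μ : Env S A E m) (h : List (A × E)) : ℝ := ∑ s, μ.hw s h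

/-- The probability `μ(æ_{<t}a_t)` of a history followed by an action. -/
def probHA (μ : Env S A E m) (h : List (A × E)) (a : A) : ℝ :=
  ∑ s, μ.hw s h * μ.pa s h a

/-- The action-evidential conditional `μ(e_t | æ_{<t}a_t)`. -/
def condE (μ : Env S A E m) (h : List (A × E)) (a : A) (e : E) : ℝ :=
  μ.probH (h ++ [(a, e)]) / μ.probHA h a

/-- The posterior `μ(s | æ_{<t})` over the hidden state. -/
def condS (μ : Env S A E m) (s : S) (h : List (A × E)) : ℝ :=
  μ.hw s h / μ.probH h

/-- The posterior `μ(s | æ_{<t}a_t)` over the hidden state, also conditioning on `a_t`. -/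
def condSA (μ : Env S A E m) (s : S) (h : List (A × E)) (a : A) : ℝ :=
  μ.hw s h * μ.pa s h a / μ.probHA h a

/-- The conditional `μ(e_t | s, æ_{<t}a_t)` given the hidden state. -/
def condESA (μ : Env S A E m) (s : S) (h : List (A × E)) (a : A) (e : E) : ℝ :=
  μ.hw s (h ++ [(a, e)]) / (μ.hw s h * μ.pa s h a)

/-! ## Causal interventions -/

/-- The intervened joint `μ(s, æ_{<t}, e_t | do(a_t := b))`: the action factor at time `t`
is deleted and `a_t` is substituted by `b`. -/
def doJoint (μ : Env S A E m) (s : S) (h : List (A × E)) (b : A) (e : E) : ℝ :=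
  μ.hw s h * μ.pe s h b e

/-- `μ(æ_{<t}, e_t | do(a_t := b))`, marginalizing the hidden state. -/
def doNum (μ : Env S A E m) (h : List (A × E)) (b : A) (e : E) : ℝ :=
  ∑ s, μ.doJoint s h b e

/-- `μ(æ_{<t} | do(a_t := b))`, marginalizing the hidden state and the percept `e_t`. -/
def doDen (μ : Env S A E m) (h : List (A × E)) (b : A) : ℝ :=
  ∑ e, μ.doNum h b e

/-- The causal conditional `μ(e_t | æ_{<t}, do(a_t := b))`. -/
def condDo (μ : Env S A E m) (h : List (A × E)) (b : A) (e : E) : ℝ :=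
  μ.doNum h b e / μ.doDen h b

/-- Product of the percept factors along the percepts `es`, all action factors being
deleted and the actions substituted according to the policy `π`:
the intervened conditional `μ(e_{t:k} | s, æ_{<t}, do(a_t := π(æ_{<t}), …))`. -/
def doPE (μ : Env S A E m) (π : List (A × E) → A) (s : S) :
    List (A × E) → List E → ℝ
  | _, [] => 1
  | h, e :: es => μ.pe s h (π h) e * μ.doPE π s (h ++ [(π h, e)]) es

/-- `μ(æ_{<t}, e_{t:k} | do(a_t := π(æ_{<t}), …, a_m := π(æ_{<m})))` where the percepts
`e_{t:k}` are given by the list `es`. -/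
def doPolNum (μ : Env S A E m) (π : List (A × E) → A) (h : List (A × E))
    (es : List E) : ℝ :=
  ∑ s, μ.hw s h * μ.doPE π s h es

/-- `μ(æ_{<t} | do(a_t := π(æ_{<t}), …, a_m := π(æ_{<m})))`, marginalizing all the
intervened percepts `e_{t:m}`. -/
def doPolDen (μ : Env S A E m) (π : List (A × E) → A) (h : List (A × E)) : ℝ :=
  ∑ es : Fin (m - h.length) → E, μ.doPolNum π h (List.ofFn es)

/-! ## Probabilities of trajectory events -/

open Classical in
/-- The probability of an event `Q` over full trajectories `æ_{1:m}`. -/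
def evP (μ : Env S A E m) (Q : (Fin m → A × E) → Prop) : ℝ :=
  ∑ τ : Fin m → A × E, if Q τ then μ.probH (List.ofFn τ) else 0

open Classical in
/-- The joint probability of the hidden state `s` and an event `Q` over full
trajectories `æ_{1:m}`. -/
def evPS (μ : Env S A E m) (s : S) (Q : (Fin m → A × E) → Prop) : ℝ :=
  ∑ τ : Fin m → A × E, if Q τ then μ.hw s (List.ofFn τ) else 0

/-- The policy-evidential conditional `μ(e_t | æ_{<t}, π_{t:m})`, conditioning on the
event that the history extends `æ_{<t}` and the actions from time `t` to `m` follow `π`. -/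
def condPev (μ : Env S A E m) (π : List (A × E) → A) (h : List (A × E)) (e : E) : ℝ :=
  μ.evP (fun τ => ExtendsH h τ ∧ FollowsFrom π h.length τ ∧ PerAt h.length e τ) /
    μ.evP (fun τ => ExtendsH h τ ∧ FollowsFrom π h.length τ)

/-- The posterior `μ(s | æ_{<t}, π_{t:m})` over the hidden state given the policy event. -/
def condSPev (μ : Env S A E m) (π : List (A × E) → A) (s : S) (h : List (A × E)) : ℝ :=
  μ.evPS s (fun τ => ExtendsH h τ ∧ FollowsFrom π h.length τ) /
    μ.evP (fun τ => ExtendsH h τ ∧ FollowsFrom π h.length τ)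

/-- The conditional `μ(e_t | s, æ_{<t}, π_{t:m})` given the hidden state and the
policy event. -/
def condESPev (μ : Env S A E m) (π : List (A × E) → A) (s : S) (h : List (A × E))
    (e : E) : ℝ :=
  μ.evPS s (fun τ => ExtendsH h τ ∧ FollowsFrom π h.length τ ∧ PerAt h.length e τ) /
    μ.evPS s (fun τ => ExtendsH h τ ∧ FollowsFrom π h.length τ)

/-- The conditional `μ(e_t | æ_{<t}a_t, π_{t+1:m})` used in the recursive definition of
the policy-evidential value. -/
def condPevA (μ : Env S A E m) (π : List (A × E) → A) (h : List (A × E)) (a : A)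
    (e : E) : ℝ :=
  μ.evP (fun τ => ExtendsH (h ++ [(a, e)]) τ ∧ FollowsFrom π (h.length + 1) τ) /
    μ.evP (fun τ => ExtendsH h τ ∧ ActAt h.length a τ ∧ FollowsFrom π (h.length + 1) τ)

/-! ## Value functions

The recursions are driven by the fuel `n`, the number of remaining time steps: the
value of a history `æ_{<t}` (for `t ≤ m + 1`) or of `æ_{<t}a_t` (for `t ≤ m`) within
lifetime `m` uses fuel `n = m - (t - 1)`, and the value is `0` for `t > m`. -/

/-- The action-evidential value `V^{aev,π}_{μ}(æ_{<t}a_t)` (with `n = m - t + 1`):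
`V^{aev,π}(æ_{<t}a_t) = ∑_{e_t} μ(e_t | æ_{<t}a_t) (u(e_t) + V^{aev,π}(æ_{<t}a_te_t))`. -/
def VaevA (μ : Env S A E m) (u : E → ℝ) (π : List (A × E) → A) :
    ℕ → List (A × E) → A → ℝ
  | 0, _, _ => 0
  | n + 1, h, a =>
    ∑ e, μ.condE h a e * (u e + μ.VaevA u π n (h ++ [(a, e)]) (π (h ++ [(a, e)])))

/-- The action-evidential value of a history, `V^{aev,π}(æ_{<t}) = V^{aev,π}(æ_{<t}π(æ_{<t}))`. -/
def Vaev (μ : Env S A E m) (u : E → ℝ) (π : List (A × E) → A) (n : ℕ)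
    (h : List (A × E)) : ℝ :=
  μ.VaevA u π n h (π h)

/-- The policy-evidential value `V^{pev,π}_{μ}(æ_{<t}a_t)` (with `n = m - t + 1`):
`V^{pev,π}(æ_{<t}a_t) = ∑_{e_t} μ(e_t | æ_{<t}a_t, π_{t+1:m}) (u(e_t) + V^{pev,π}(æ_{<t}a_te_t))`. -/
def VpevA (μ : Env S A E m) (u : E → ℝ) (π : List (A × E) → A) :
    ℕ → List (A × E) → A → ℝ
  | 0, _, _ => 0
  | n + 1, h, a =>
    ∑ e, μ.condPevA π h a e * (u e + μ.VpevA u π n (h ++ [(a, e)]) (π (h ++ [(a, e)])))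

/-- The policy-evidential value of a history. -/
def Vpev (μ : Env S A E m) (u : E → ℝ) (π : List (A × E) → A) (n : ℕ)
    (h : List (A × E)) : ℝ :=
  μ.VpevA u π n h (π h)

/-- The causal value `V^{cau,π}_{μ}(æ_{<t}a_t)` (with `n = m - t + 1`):
`V^{cau,π}(æ_{<t}a_t) = ∑_{e_t} μ(e_t | æ_{<t}, do(a_t)) (u(e_t) + V^{cau,π}(æ_{<t}a_te_t))`. -/
def VcauA (μ : Env S A E m) (u : E → ℝ) (π : List (A × E) → A) :
    ℕ → List (A × E) → A → ℝ
  | 0, _, _ => 0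
  | n + 1, h, a =>
    ∑ e, μ.condDo h a e * (u e + μ.VcauA u π n (h ++ [(a, e)]) (π (h ++ [(a, e)])))

/-- The causal value of a history. -/
def Vcau (μ : Env S A E m) (u : E → ℝ) (π : List (A × E) → A) (n : ℕ)
    (h : List (A × E)) : ℝ :=
  μ.VcauA u π n h (π h)

/-! ## Products of one-step conditionals, for the iterative forms -/

/-- `∏_{i=t}^{k} μ(e_i | æ_{<i}a_i)` with `a_i := π(æ_{<i})`, the percepts `e_{t:k}`
being given by the list `es`. -/
def prodAev (μ : Env S A E m) (π : List (A × E) → A) : List (A × E) → List E → ℝ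
  | _, [] => 1
  | h, e :: es => μ.condE h (π h) e * μ.prodAev π (h ++ [(π h, e)]) es

/-- `∏_{i=t}^{k} μ(e_i | æ_{<i}, π_{i:m})`. -/
def prodPev (μ : Env S A E m) (π : List (A × E) → A) : List (A × E) → List E → ℝ
  | _, [] => 1
  | h, e :: es => μ.condPev π h e * μ.prodPev π (h ++ [(π h, e)]) es

/-- `∏_{i=t}^{k} μ(e_i | æ_{<i}, do(a_i))` with `a_i := π(æ_{<i})`. -/
def prodCau (μ : Env S A E m) (π : List (A × E) → A) : List (A × E) → List E → ℝ
  | _, [] => 1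
  | h, e :: es => μ.condDo h (π h) e * μ.prodCau π (h ++ [(π h, e)]) es

/-- `∏_{i=t}^{k} ∑_{s} μ(s | æ_{<i}) μ(e_i | s, æ_{<i}a_i)` with `a_i := π(æ_{<i})`. -/
def prodCauX (μ : Env S A E m) (π : List (A × E) → A) : List (A × E) → List E → ℝ
  | _, [] => 1
  | h, e :: es =>
    (∑ s, μ.condS s h * μ.condESA s h (π h) e) * μ.prodCauX π (h ++ [(π h, e)]) es

end Env

end

/-! ## The sequential toxoplasmosis environment (lifetime m = 2)

Hidden states `T` (infected) / `H` (healthy), prior 1/2 each. At step 1 the agent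
chooses `Y` (see the doctor) or `N` (don't); seeing the doctor gives percept `C`
(utility −4). Otherwise an infected agent meets a kitten `K` with probability 0.2 and
gets sick `Sick` (utility −10) with probability 0.8, while a healthy agent meets the
kitten with probability 1. After `N₁K` the agent pets (`Y`) with probability 0.8 if
infected and 0.2 if healthy; petting while infected gives `SickPet` (−9), not petting
while infected gives `Sick` (−10), petting while healthy gives `Pet` (+1), otherwise
`Z` (0). All remaining action probabilities are uniform (1/2) and all remaining
percepts are `Z` (utility 0). -/

/-- Hidden states: infected (`T`) or healthy (`H`). -/
inductive TSt | T | H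
  deriving DecidableEq

instance : Fintype TSt :=
  ⟨⟨↑[TSt.T, TSt.H], by decide⟩, fun x => by cases x <;> decide⟩

/-- Actions: `Y` (see the doctor / pet the kitten) or `N`. -/
inductive TAct | Y | N
  deriving DecidableEq

instance : Fintype TAct :=
  ⟨⟨↑[TAct.Y, TAct.N], by decide⟩, fun x => by cases x <;> decide⟩

/-- Percepts: cured (`C`), kitten (`K`), sick not petting (`Sick`), sick petting
(`SickPet`), healthy petting (`Pet`), neutral (`Z`). -/
inductive TPer | C | K | Sick | SickPet | Pet | Z
  deriving DecidableEq

instance : Fintype TPer :=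
  ⟨⟨↑[TPer.C, TPer.K, TPer.Sick, TPer.SickPet, TPer.Pet, TPer.Z], by decide⟩,
    fun x => by cases x <;> decide⟩

/-- The action factors `μ(a_t | s, æ_{<t})` of the sequential toxoplasmosis problem. -/
noncomputable def toxPa : TSt → List (TAct × TPer) → TAct → ℝ
  | TSt.T, [(TAct.N, TPer.K)], TAct.Y => 0.8
  | TSt.T, [(TAct.N, TPer.K)], TAct.N => 0.2
  | TSt.H, [(TAct.N, TPer.K)], TAct.Y => 0.2
  | TSt.H, [(TAct.N, TPer.K)], TAct.N => 0.8
  | _, _, _ => 1 / 2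

/-- The percept factors `μ(e_t | s, æ_{<t}a_t)` of the sequential toxoplasmosis problem. -/
noncomputable def toxPe : TSt → List (TAct × TPer) → TAct → TPer → ℝ
  | _, [], TAct.Y, TPer.C => 1
  | _, [], TAct.Y, _ => 0
  | TSt.T, [], TAct.N, TPer.K => 0.2
  | TSt.T, [], TAct.N, TPer.Sick => 0.8
  | TSt.T, [], TAct.N, _ => 0
  | TSt.H, [], TAct.N, TPer.K => 1
  | TSt.H, [], TAct.N, _ => 0
  | TSt.T, [(TAct.N, TPer.K)], TAct.Y, TPer.SickPet => 1
  | TSt.T, [(TAct.N, TPer.K)], TAct.Y, _ => 0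
  | TSt.T, [(TAct.N, TPer.K)], TAct.N, TPer.Sick => 1
  | TSt.T, [(TAct.N, TPer.K)], TAct.N, _ => 0
  | TSt.H, [(TAct.N, TPer.K)], TAct.Y, TPer.Pet => 1
  | TSt.H, [(TAct.N, TPer.K)], TAct.Y, _ => 0
  | TSt.H, [(TAct.N, TPer.K)], TAct.N, TPer.Z => 1
  | TSt.H, [(TAct.N, TPer.K)], TAct.N, _ => 0
  | _, _, _, TPer.Z => 1
  | _, _, _, _ => 0

/-- The sequential toxoplasmosis environment model, lifetime `m = 2`. -/
noncomputable def toxEnv : Env TSt TAct TPer 2 where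
  prior := fun _ => 1 / 2
  pa := toxPa
  pe := toxPe
  prior_nonneg := by intro s; norm_num
  prior_sum := by
    rw [show (Finset.univ : Finset TSt) = {TSt.T, TSt.H} by decide,
      Finset.sum_insert (by decide), Finset.sum_singleton]
    norm_num
  pa_nonneg := by intro s h a; unfold toxPa; split <;> norm_num
  pa_sum := by
    intro s h hlen
    rw [show (Finset.univ : Finset TAct) = {TAct.Y, TAct.N} by decide,
      Finset.sum_insert (by decide), Finset.sum_singleton]
    rcases h with _ | ⟨⟨a1, e1⟩, _ | ⟨p, t⟩⟩
    · cases s <;> norm_num [toxPa]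
    · cases s <;> cases a1 <;> cases e1 <;> norm_num [toxPa]
    · simp only [List.length_cons] at hlen; omega
  pe_nonneg := by intro s h a e; unfold toxPe; split <;> norm_num
  pe_sum := by
    intro s h a hlen
    rw [show (Finset.univ : Finset TPer) =
        {TPer.C, TPer.K, TPer.Sick, TPer.SickPet, TPer.Pet, TPer.Z} by decide,
      Finset.sum_insert (by decide), Finset.sum_insert (by decide),
      Finset.sum_insert (by decide), Finset.sum_insert (by decide),
      Finset.sum_insert (by decide), Finset.sum_singleton]
    rcases h with _ | ⟨⟨a1, e1⟩, _ | ⟨p, t⟩⟩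
    · cases s <;> cases a <;> norm_num [toxPe]
    · cases s <;> cases a <;> cases a1 <;> cases e1 <;> norm_num [toxPe]
    · simp only [List.length_cons] at hlen; omega
  action_pos := by
    intro s h a hlen hpos
    unfold toxPa; split <;> norm_num

/-- The utility function of the sequential toxoplasmosis problem. -/
noncomputable def toxU : TPer → ℝ
  | TPer.C => -4
  | TPer.K => 0
  | TPer.Sick => -10
  | TPer.SickPet => -9
  | TPer.Pet => 1
  | TPer.Z => 0

/-- The policy `π₁`: don't see the doctor, never pet the kitten. -/
def toxPi1 : List (TAct × TPer) → TAct := fun _ => TAct.N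

/-- The policy `π₂`: see the doctor (the step-2 action is irrelevant). -/
def toxPi2 : List (TAct × TPer) → TAct
  | [] => TAct.Y
  | _ => TAct.N

/-! With lifetime 2 a trajectory is a pair of action–percept pairs, so every policy-evidential
conditional is a ratio of finite sums of history probabilities (`Env.condPevA_nil`,
`Env.condPevA_singleton`). Conditioning on the event that the agent follows `π₁`, i.e. never
pets, is evidence of health: an infected agent declines to pet with probability 0.2, a healthy
one with 0.8. This lowers the probability of getting sick to 10/31 at step 1 and to 1/21 at
step 2, so `V^{pev,π₁} = 21/31 · (−10/21) + 10/31 · (−10) = −110/31 > −4`. -/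

theorem Fintype.sum_prod_ite_fst_eq {α β M : Type*} [Fintype α] [Fintype β] [AddCommMonoid M]
    (a : α) (f : α × β → M) [∀ q : α × β, Decidable (q.1 = a)] :
    (∑ q : α × β, if q.1 = a then f q else 0) = ∑ b, f (a, b) := by
  rw [Fintype.sum_prod_type, Finset.sum_eq_single a (fun x _ hx => by simp [hx]) (by simp)]
  simp

section
variable {S A E : Type*}

@[simp] theorem extendsH_nil {m : ℕ} (τ : Fin m → A × E) : ExtendsH [] τ := by
  simp [ExtendsH]

@[simp] theorem extendsH_singleton_vec (p x y : A × E) : ExtendsH [p] ![x, y] ↔ x = p := by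
  simp [ExtendsH, List.ofFn_succ]

@[simp] theorem extendsH_pair_vec (p q x y : A × E) :
    ExtendsH [p, q] ![x, y] ↔ x = p ∧ y = q := by
  simp [ExtendsH, List.ofFn_succ]

@[simp] theorem actAt_zero_vec (a : A) (x y : A × E) : ActAt 0 a ![x, y] ↔ x.1 = a := by
  simp [ActAt]

@[simp] theorem actAt_one_vec (a : A) (x y : A × E) : ActAt 1 a ![x, y] ↔ y.1 = a := by
  simp [ActAt]

@[simp] theorem followsFrom_two_vec (π : List (A × E) → A) (x y : A × E) :
    FollowsFrom π 2 ![x, y] := by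
  simp [FollowsFrom, Fin.forall_fin_two]

@[simp] theorem followsFrom_one_vec (π : List (A × E) → A) (x y : A × E) :
    FollowsFrom π 1 ![x, y] ↔ y.1 = π [x] := by
  simp [FollowsFrom, Fin.forall_fin_two, List.ofFn_succ]

end

namespace Env
variable {S A E : Type*} [Fintype S] [Fintype A] [Fintype E]

open Classical in
theorem evP_eq_sum_pair (μ : Env S A E 2)
    (Q : (Fin 2 → A × E) → Prop) :
    μ.evP Q = ∑ p, ∑ q, if Q ![p, q] then μ.probH [p, q] else 0 := by
  rw [evP, ← (finTwoArrowEquiv (A × E)).symm.sum_comp, Fintype.sum_prod_type]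
  rfl

open Classical in
theorem condPevA_singleton (μ : Env S A E 2) (π : List (A × E) → A) (p : A × E) (a : A)
    (e : E) :
    μ.condPevA π [p] a e = μ.probH [p, (a, e)] / ∑ e', μ.probH [p, (a, e')] := by
  simp only [condPevA, evP_eq_sum_pair, List.length_singleton, List.singleton_append,
    Nat.reduceAdd, extendsH_pair_vec, extendsH_singleton_vec, actAt_one_vec,
    followsFrom_two_vec, and_true, ite_and, Finset.sum_ite_irrel, Finset.sum_const_zero,
    Finset.sum_ite_eq', Finset.mem_univ, if_true, Fintype.sum_prod_ite_fst_eq]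

open Classical in
theorem condPevA_nil (μ : Env S A E 2) (π : List (A × E) → A) (a : A) (e : E) :
    μ.condPevA π [] a e = (∑ e₂, μ.probH [(a, e), (π [(a, e)], e₂)]) /
      ∑ e₁, ∑ e₂, μ.probH [(a, e₁), (π [(a, e₁)], e₂)] := by
  simp only [condPevA, evP_eq_sum_pair, List.length_nil, List.nil_append, zero_add,
    extendsH_singleton_vec, extendsH_nil, actAt_zero_vec, followsFrom_one_vec, true_and,
    ite_and, Finset.sum_ite_eq', Finset.mem_univ, if_true, Finset.sum_ite_irrel,
    Finset.sum_const_zero, Fintype.sum_prod_ite_fst_eq]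

variable {m : ℕ}

theorem Vpev_zero (μ : Env S A E m) (u : E → ℝ) (π : List (A × E) → A) (h : List (A × E)) :
    μ.Vpev u π 0 h = 0 := rfl

theorem Vpev_succ (μ : Env S A E m) (u : E → ℝ) (π : List (A × E) → A) (n : ℕ)
    (h : List (A × E)) :
    μ.Vpev u π (n + 1) h =
      ∑ e, μ.condPevA π h (π h) e * (u e + μ.Vpev u π n (h ++ [(π h, e)])) := rfl

end Env

theorem TSt.sum_univ {M : Type*} [AddCommMonoid M] (f : TSt → M) : ∑ s, f s = f .T + f .H := by
  simp [Finset.sum, Finset.univ, Fintype.elems]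

theorem TPer.sum_univ {M : Type*} [AddCommMonoid M] (f : TPer → M) :
    ∑ e, f e = f .C + f .K + f .Sick + f .SickPet + f .Pet + f .Z := by
  simp [Finset.sum, Finset.univ, Fintype.elems, add_assoc]

theorem toxEnv_probH_pair (a₁ a₂ : TAct) (e₁ e₂ : TPer) :
    toxEnv.probH [(a₁, e₁), (a₂, e₂)] =
      1 / 2 * (toxPa .T [] a₁ * toxPe .T [] a₁ e₁ *
        (toxPa .T [(a₁, e₁)] a₂ * toxPe .T [(a₁, e₁)] a₂ e₂)) +
      1 / 2 * (toxPa .H [] a₁ * toxPe .H [] a₁ e₁ *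
        (toxPa .H [(a₁, e₁)] a₂ * toxPe .H [(a₁, e₁)] a₂ e₂)) := by
  simp [Env.probH, Env.hw, toxEnv, wSuf, TSt.sum_univ]

theorem toxEnv_sum_probH_N_N (e : TPer) :
    ∑ e₂, toxEnv.probH [(.N, e), (.N, e₂)] =
      if e = .K then 21 / 100 else if e = .Sick then 1 / 10 else 0 := by
  cases e <;> simp [TPer.sum_univ, toxEnv_probH_pair, toxPa, toxPe] <;> norm_num

theorem toxEnv_sum_probH_Y_N (e : TPer) :
    ∑ e₂, toxEnv.probH [(.Y, e), (.N, e₂)] = if e = .C then 1 / 4 else 0 := by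
  cases e <;> simp [TPer.sum_univ, toxEnv_probH_pair, toxPa, toxPe]
  norm_num

theorem toxEnv_condPevA_pi1_nil (e : TPer) : toxEnv.condPevA toxPi1 [] .N e =
    if e = .K then 21 / 31 else if e = .Sick then 10 / 31 else 0 := by
  simp only [Env.condPevA_nil, toxPi1, toxEnv_sum_probH_N_N]
  cases e <;> simp [TPer.sum_univ] <;> norm_num

theorem toxEnv_condPevA_pi2_nil (e : TPer) : toxEnv.condPevA toxPi2 [] .Y e =
    if e = .C then 1 else 0 := by
  simp only [Env.condPevA_nil, toxPi2, toxEnv_sum_probH_Y_N]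
  cases e <;> simp

theorem toxEnv_Vpev_pi1_NK : toxEnv.Vpev toxU toxPi1 1 [(.N, .K)] = -(10 / 21) := by
  simp [Env.Vpev_succ, Env.Vpev_zero, Env.condPevA_singleton, TPer.sum_univ, toxPi1,
    toxEnv_probH_pair, toxPa, toxPe, toxU]
  norm_num

theorem toxEnv_Vpev_pi1_NSick : toxEnv.Vpev toxU toxPi1 1 [(.N, .Sick)] = 0 := by
  simp [Env.Vpev_succ, Env.Vpev_zero, Env.condPevA_singleton, TPer.sum_univ, toxPi1,
    toxEnv_probH_pair, toxPa, toxPe, toxU]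

theorem toxEnv_Vpev_pi2_YC : toxEnv.Vpev toxU toxPi2 1 [(.Y, .C)] = 0 := by
  simp [Env.Vpev_succ, Env.Vpev_zero, Env.condPevA_singleton, TPer.sum_univ, toxPi2,
    toxEnv_probH_pair, toxPa, toxPe, toxU]

theorem toxEnv_Vpev_pi1 : toxEnv.Vpev toxU toxPi1 2 [] = -(110 / 31) := by
  rw [Env.Vpev_succ, TPer.sum_univ]
  simp [toxPi1, toxEnv_condPevA_pi1_nil, toxEnv_Vpev_pi1_NK, toxEnv_Vpev_pi1_NSick, toxU]
  norm_num

theorem toxEnv_Vpev_pi2 : toxEnv.Vpev toxU toxPi2 2 [] = -4 := by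
  rw [Env.Vpev_succ, TPer.sum_univ]
  simp [toxPi2, toxEnv_condPevA_pi2_nil, toxEnv_Vpev_pi2_YC, toxU]

/-- **Sequential toxoplasmosis, policy-evidential values**: from the empty history,
`V^{pev,π₁}_{μ,2} = -110/31` (no doctor, never pet) and `V^{pev,π₂}_{μ,2} = -4` (see the
doctor); hence SPEDT strictly prefers not seeing the doctor — the opposite preference
to SAEDT. -/
theorem sequential_toxoplasmosis_policy_evidential :
    toxEnv.Vpev toxU toxPi1 2 [] = -(110 / 31) ∧
    toxEnv.Vpev toxU toxPi2 2 [] = -4 ∧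
    toxEnv.Vpev toxU toxPi1 2 [] > toxEnv.Vpev toxU toxPi2 2 [] := by
  refine ⟨toxEnv_Vpev_pi1, toxEnv_Vpev_pi2, ?_⟩
  rw [toxEnv_Vpev_pi1, toxEnv_Vpev_pi2]
  norm_num
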